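/- The least model M_P = T_P^ω(⊥) of any program P is a consistent term algebra: for every function symbol f, arguments t̄, and total constructor substitution θ, (f^{M_P}(t̄))θ ⊆ f^{M_P}(t̄θ). -/
import Mathlib


namespace CRWL

/-- Terms over variables `V`, constructor symbols `C`, and function symbols `F`. -/
inductive Tm (V C F : Type) : Type
  | var : V → Tm V C F
  | bot : Tm V C F
  | cons : C → List (Tm V C F) → Tm V C F
  | fn : F → List (Tm V C F) → Tm V C F

variable {V C F : Type}

/-- Approximation ordering on partial constructor terms. -/
inductive Approx : Tm V C F → Tm V C F → Prop
  | bot (t) : Approx .bot t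
  | var (X) : Approx (.var X) (.var X)
  | cons (c : C) {ss ts : List (Tm V C F)} : ss.length = ts.length →
      (∀ p ∈ ss.zip ts, Approx p.1 p.2) → Approx (.cons c ss) (.cons c ts)

/-- Partial constructor terms: no function symbols. -/
inductive IsCTm : Tm V C F → Prop
  | var (X) : IsCTm (.var X)
  | bot : IsCTm .bot
  | cons (c) {ts} : (∀ t ∈ ts, IsCTm t) → IsCTm (.cons c ts)

/-- Total constructor terms: no `⊥`, no function symbols. -/
inductive TotalC : Tm V C F → Prop
  | var (X) : TotalC (.var X)
  | cons (c) {ts} : (∀ t ∈ ts, TotalC t) → TotalC (.cons c ts)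

/-- Homomorphic extension of a substitution to terms. -/
def subst (θ : V → Tm V C F) : Tm V C F → Tm V C F
  | .var X => θ X
  | .bot => .bot
  | .cons c ts => .cons c (ts.attach.map (fun x => subst θ x.1))
  | .fn f ts => .fn f (ts.attach.map (fun x => subst θ x.1))
termination_by t => sizeOf t
decreasing_by all_goals (simp_wf; have := List.sizeOf_lt_of_mem x.2; omega)

/-- A (term-)algebra interpretation of the function symbols: cones of partial
constructor terms as results. -/
abbrev Alg (V C F : Type) := F → List (Tm V C F) → Set (Tm V C F)

/-- `Eval A θ e u` : `u` belongs to the evaluation cone `[[e]]^A_θ`. -/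
inductive Eval (A : Alg V C F) (θ : V → Tm V C F) : Tm V C F → Tm V C F → Prop
  | var {X u} : Approx u (θ X) → Eval A θ (.var X) u
  | bot : Eval A θ .bot .bot
  | cons {c : C} {es us : List (Tm V C F)} {u} : es.length = us.length →
      (∀ p ∈ es.zip us, Eval A θ p.1 p.2) →
      Approx u (.cons c us) → Eval A θ (.cons c es) u
  | fn {f : F} {es us : List (Tm V C F)} {u} : es.length = us.length →
      (∀ p ∈ es.zip us, Eval A θ p.1 p.2) →
      u ∈ A f us → Eval A θ (.fn f es) u

/-- `A` is a term algebra: every value is a cone (contains `⊥`, down-closed) and the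
interpretations are monotone wrt the approximation ordering on arguments. -/
def IsTAlg (A : Alg V C F) : Prop :=
  ∀ f ts, Tm.bot ∈ A f ts ∧
    (∀ u ∈ A f ts, ∀ v, Approx v u → v ∈ A f ts) ∧
    (∀ ts', ts.length = ts'.length → (∀ p ∈ ts.zip ts', Approx p.1 p.2) →
      A f ts ⊆ A f ts')

/-- A conditional rewrite rule `head(lhs) → rhs ⇐ cond`. -/
structure Rul (V C F : Type) where
  head : F
  lhs : List (Tm V C F)
  rhs : Tm V C F
  cond : List (Tm V C F × Tm V C F)

/-- Satisfaction of a joinability statement `a ⋈ b` in `A` under valuation `θ`. -/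
def Sat (A : Alg V C F) (θ : V → Tm V C F) (a b : Tm V C F) : Prop :=
  ∃ t, TotalC t ∧ Eval A θ a t ∧ Eval A θ b t

/-- The immediate consequence operator of a program `R`. -/
def TR (R : Set (Rul V C F)) (A : Alg V C F) : Alg V C F :=
  fun f ts => insert Tm.bot
    { u | ∃ ru ∈ R, ru.head = f ∧ ∃ θ : V → Tm V C F,
        (∀ X, IsCTm (θ X)) ∧
        ru.lhs.length = ts.length ∧
        (∀ p ∈ ru.lhs.zip ts, Approx (subst θ p.1) p.2) ∧
        (∀ p ∈ ru.cond, Sat A Tm.var (subst θ p.1) (subst θ p.2)) ∧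
        Eval A Tm.var (subst θ ru.rhs) u }

/-- A term algebra is consistent iff `(f^A(t̄))θ ⊆ f^A(t̄θ)` for every total
constructor substitution `θ`. -/
def Consistent {V C F : Type} (A : Alg V C F) : Prop :=
  ∀ f ts (θ : V → Tm V C F), (∀ X, TotalC (θ X)) →
    ∀ u ∈ A f ts, subst θ u ∈ A f (ts.map (subst θ))

/-- The bottom term algebra. -/
def algBot {V C F : Type} : Alg V C F := fun _ _ => {Tm.bot}

/-- Supremum of the Kleene chain `⊥, T_R ⊥, T_R² ⊥, …`. -/
def lfpTR {V C F : Type} (R : Set (Rul V C F)) : Alg V C F :=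
  fun f ts => ⋃ n : ℕ, (TR R)^[n] algBot f ts

/-! ### Auxiliary lemmas -/

theorem subst_cons (θ : V → Tm V C F) (c : C) (ts : List (Tm V C F)) :
    subst θ (.cons c ts) = .cons c (ts.map (subst θ)) := by
  rw [subst]
  congr 1
  simp

theorem subst_fn (θ : V → Tm V C F) (f : F) (ts : List (Tm V C F)) :
    subst θ (.fn f ts) = .fn f (ts.map (subst θ)) := by
  rw [subst]
  congr 1
  simp

theorem mem_zip_self {l : List (Tm V C F)} :
    ∀ p ∈ l.zip l, p.1 = p.2 ∧ p.1 ∈ l := by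
  induction l with
  | nil => simp
  | cons a l ih =>
    intro p hp
    rw [List.zip_cons_cons, List.mem_cons] at hp
    rcases hp with rfl | hp
    · simp
    · rcases ih p hp with ⟨h1, h2⟩
      exact ⟨h1, List.mem_cons_of_mem _ h2⟩

theorem subst_comp (θ θ' : V → Tm V C F) : ∀ t : Tm V C F,
    subst (fun X => subst θ (θ' X)) t = subst θ (subst θ' t)
  | .var X => by rw [subst, subst]
  | .bot => by rw [subst]; rw [subst, subst]
  | .cons c ts => by
    rw [subst_cons, subst_cons, subst_cons, List.map_map]
    congr 1
    exact List.map_congr_left (fun a ha => subst_comp θ θ' a)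
  | .fn f ts => by
    rw [subst_fn, subst_fn, subst_fn, List.map_map]
    congr 1
    exact List.map_congr_left (fun a ha => subst_comp θ θ' a)
termination_by t => sizeOf t
decreasing_by all_goals (simp_wf; have := List.sizeOf_lt_of_mem ha; omega)

theorem TotalC.isCTm {t : Tm V C F} (h : TotalC t) : IsCTm t := by
  induction h with
  | var X => exact .var X
  | cons c _ ih => exact .cons _ ih

theorem IsCTm.subst {θ : V → Tm V C F} (hθ : ∀ X, IsCTm (θ X)) {t : Tm V C F}
    (h : IsCTm t) : IsCTm (subst θ t) := by
  induction h with
  | var X => rw [CRWL.subst]; exact hθ X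
  | bot => rw [CRWL.subst]; exact .bot
  | cons c _ ih =>
    rw [subst_cons]
    exact .cons _ (by simpa using ih)

theorem TotalC.subst {θ : V → Tm V C F} (hθ : ∀ X, TotalC (θ X)) {t : Tm V C F}
    (h : TotalC t) : TotalC (subst θ t) := by
  induction h with
  | var X => rw [CRWL.subst]; exact hθ X
  | cons c _ ih =>
    rw [subst_cons]
    exact .cons _ (by simpa using ih)

theorem Approx.refl_ctm {t : Tm V C F} (h : IsCTm t) : Approx t t := by
  induction h with
  | var X => exact .var X
  | bot => exact .bot _
  | cons c _ ih =>
    refine .cons _ rfl fun p hp => ?_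
    obtain ⟨h1, h2⟩ := mem_zip_self p hp
    rw [← h1]
    exact ih _ h2

theorem Approx.subst {θ : V → Tm V C F} (hθ : ∀ X, TotalC (θ X)) {s t : Tm V C F}
    (h : Approx s t) : Approx (subst θ s) (subst θ t) := by
  induction h with
  | bot t => rw [CRWL.subst]; exact .bot _
  | var X => rw [CRWL.subst]; exact .refl_ctm (hθ X).isCTm
  | cons c hlen _ ih =>
    rw [subst_cons, subst_cons]
    refine .cons _ (by simp [hlen]) fun p hp => ?_
    rw [List.zip_map] at hp
    obtain ⟨q, hq, rfl⟩ := List.mem_map.1 hp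
    exact ih q hq

theorem Eval.bot_of_ctm (A : Alg V C F) (θ₀ : V → Tm V C F) {t : Tm V C F}
    (h : IsCTm t) : Eval A θ₀ t .bot := by
  induction h with
  | var X => exact .var (.bot _)
  | bot => exact .bot
  | cons c _ ih =>
    rename_i ts _
    refine .cons (us := ts.map (fun _ => Tm.bot)) (by simp) ?_ (.bot _)
    intro p hp
    rw [List.zip_map_right] at hp
    obtain ⟨q, hq, rfl⟩ := List.mem_map.1 hp
    obtain ⟨h1, h2⟩ := mem_zip_self q hq
    exact ih _ h2

theorem Eval.refl_ctm (A : Alg V C F) {t : Tm V C F} (h : IsCTm t) :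
    Eval A Tm.var t t := by
  induction h with
  | var X => exact .var (.var X)
  | bot => exact .bot
  | cons c hts ih =>
    refine .cons (us := _) rfl ?_ (Approx.refl_ctm (.cons _ hts))
    intro p hp
    obtain ⟨h1, h2⟩ := mem_zip_self p hp
    rw [← h1]
    exact ih _ h2

theorem Eval.subst {A : Alg V C F} (hA : Consistent A) {θ : V → Tm V C F}
    (hθ : ∀ X, TotalC (θ X)) {e u : Tm V C F}
    (h : Eval A Tm.var e u) : Eval A Tm.var (subst θ e) (subst θ u) := by
  induction h with
  | var hu =>
    cases hu with
    | bot => rw [CRWL.subst, CRWL.subst]; exact .bot_of_ctm _ _ (hθ _).isCTm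
    | var => rw [CRWL.subst]; exact .refl_ctm _ (hθ _).isCTm
  | bot => rw [CRWL.subst]; exact .bot
  | cons hlen _ hu ih =>
    rename_i c es us uu _
    rw [subst_cons]
    refine .cons (us := us.map (CRWL.subst θ)) (by simp [hlen]) ?_
      (by rw [← subst_cons]; exact hu.subst hθ)
    intro p hp
    rw [List.zip_map] at hp
    obtain ⟨q, hq, rfl⟩ := List.mem_map.1 hp
    exact ih q hq
  | fn hlen _ hu ih =>
    rename_i f es us uu _
    rw [subst_fn]
    refine .fn (us := us.map (CRWL.subst θ)) (by simp [hlen]) ?_ (hA _ _ θ hθ _ hu)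
    intro p hp
    rw [List.zip_map] at hp
    obtain ⟨q, hq, rfl⟩ := List.mem_map.1 hp
    exact ih q hq

theorem TR_consistent {R : Set (Rul V C F)} {A : Alg V C F} (hA : Consistent A) :
    Consistent (TR R A) := by
  intro f ts θ hθ u hu
  rcases hu with rfl | ⟨ru, hru, hhead, θ', hθ', hlen, happrox, hsat, heval⟩
  · rw [CRWL.subst]; exact Set.mem_insert _ _
  · refine Set.mem_insert_iff.2 (Or.inr ⟨ru, hru, hhead, fun X => subst θ (θ' X),
      fun X => (hθ' X).subst (fun Y => (hθ Y).isCTm), by simp [hlen], ?_, ?_, ?_⟩)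
    · intro p hp
      rw [List.zip_map_right] at hp
      obtain ⟨q, hq, rfl⟩ := List.mem_map.1 hp
      rw [subst_comp]
      exact (happrox q hq).subst hθ
    · intro p hp
      obtain ⟨t, ht, e1, e2⟩ := hsat p hp
      exact ⟨CRWL.subst θ t, ht.subst hθ, by rw [subst_comp]; exact e1.subst hA hθ,
        by rw [subst_comp]; exact e2.subst hA hθ⟩
    · rw [subst_comp]; exact heval.subst hA hθ

theorem iterate_consistent (R : Set (Rul V C F)) : ∀ n : ℕ,
    Consistent ((TR R)^[n] algBot)
  | 0 => by
    intro f ts θ hθ u hu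
    simp only [Function.iterate_zero, id] at *
    rcases hu with rfl
    rw [CRWL.subst]; exact rfl
  | n + 1 => by
    rw [Function.iterate_succ_apply']
    exact TR_consistent (iterate_consistent R n)

/-- The least model `M_P = T_P^ω(⊥)` of any program is a consistent term algebra:
`(f^{M_P}(t̄))θ ⊆ f^{M_P}(t̄θ)` for every total constructor substitution `θ`. -/
theorem lfpTR_consistent {V C F : Type} (R : Set (Rul V C F)) :
    ∀ f ts (θ : V → Tm V C F), (∀ X, TotalC (θ X)) →
      ∀ u ∈ lfpTR R f ts, subst θ u ∈ lfpTR R f (ts.map (subst θ)) := by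
  intro f ts θ hθ u hu
  obtain ⟨s, ⟨n, rfl⟩, hn⟩ := hu
  exact Set.mem_iUnion.2 ⟨n, iterate_consistent R n f ts θ hθ u hn⟩

end CRWL
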